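/- Every positive integer n with n < 103 can be written as a sum of two {2,3}-integers; that is, every positive integer less than 103 has a double-base representation of length 2. Consequently, 103 is the smallest positive integer with no double-base representation of length 2. -/
import Mathlib

/-- A `{2,3}`-integer: a nonzero integer of the form `±2^a·3^b`. -/
def IsTwoThree (k : ℤ) : Prop := ∃ a b : ℕ, k = 2 ^ a * 3 ^ b ∨ k = -(2 ^ a * 3 ^ b)

/-- `n` has a double-base representation of length `r`. -/
def HasRep (n : ℤ) (r : ℕ) : Prop :=
  ∃ f : Fin r → ℤ, (∀ i, IsTwoThree (f i)) ∧ n = ∑ i, f i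

lemma hrpp (n : ℤ) (a b c d : ℕ) (h : n = 2 ^ a * 3 ^ b + 2 ^ c * 3 ^ d) : HasRep n 2 := by
  refine ⟨![2 ^ a * 3 ^ b, 2 ^ c * 3 ^ d], ?_, ?_⟩
  · intro i
    fin_cases i
    · exact ⟨a, b, Or.inl rfl⟩
    · exact ⟨c, d, Or.inl rfl⟩
  · rw [Fin.sum_univ_two]; simpa using h

lemma hrpn (n : ℤ) (a b c d : ℕ) (h : n = 2 ^ a * 3 ^ b - 2 ^ c * 3 ^ d) : HasRep n 2 := by
  refine ⟨![2 ^ a * 3 ^ b, -(2 ^ c * 3 ^ d)], ?_, ?_⟩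
  · intro i
    fin_cases i
    · exact ⟨a, b, Or.inl rfl⟩
    · exact ⟨c, d, Or.inr rfl⟩
  · rw [Fin.sum_univ_two]; simp only [Matrix.cons_val_zero, Matrix.cons_val_one, Matrix.head_cons]
    linarith

lemma pow_mod_eq {M : Type*} [Monoid M] (x : M) (k : ℕ) (hx : x ^ k = 1) (n : ℕ) :
    x ^ n = x ^ (n % k) := by
  conv_lhs => rw [← Nat.div_add_mod n k]
  rw [pow_add, pow_mul, hx, one_pow, one_mul]

lemma dec1 : ∀ i < 9, ∀ j < 12, (2 : ZMod 73) ^ i ≠ 103 + 3 ^ j := by decide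

lemma no1 : ∀ a d : ℕ, (2 : ℤ) ^ a ≠ 103 + 3 ^ d := by
  intro a d h
  have h73 : (2 : ZMod 73) ^ a = 103 + 3 ^ d := by
    have := congrArg (fun z : ℤ => (z : ZMod 73)) h
    push_cast at this
    exact this
  rw [pow_mod_eq (2 : ZMod 73) 9 (by decide) a,
      pow_mod_eq (3 : ZMod 73) 12 (by decide) d] at h73
  exact dec1 _ (Nat.mod_lt a (by norm_num)) _ (Nat.mod_lt d (by norm_num)) h73

lemma dec2 : ∀ i < 6, ∀ j < 12, (3 : ZMod 91) ^ i ≠ 103 + 2 ^ j := by decide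

lemma no2 : ∀ b c : ℕ, (3 : ℤ) ^ b ≠ 103 + 2 ^ c := by
  intro b c h
  have h91 : (3 : ZMod 91) ^ b = 103 + 2 ^ c := by
    have := congrArg (fun z : ℤ => (z : ZMod 91)) h
    push_cast at this
    exact this
  rw [pow_mod_eq (3 : ZMod 91) 6 (by decide) b,
      pow_mod_eq (2 : ZMod 91) 12 (by decide) c] at h91
  exact dec2 _ (Nat.mod_lt b (by norm_num)) _ (Nat.mod_lt c (by norm_num)) h91

lemma dec3 : ∀ i < 12, ∀ j < 3, (2 : ZMod 13) ^ i * 3 ^ j ≠ 104 := by decide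

lemma no104 : ∀ a b : ℕ, (2 : ℤ) ^ a * 3 ^ b ≠ 104 := by
  intro a b h
  have h13 : (2 : ZMod 13) ^ a * 3 ^ b = 104 := by
    have := congrArg (fun z : ℤ => (z : ZMod 13)) h
    push_cast at this
    exact this
  rw [pow_mod_eq (2 : ZMod 13) 12 (by decide) a,
      pow_mod_eq (3 : ZMod 13) 3 (by decide) b] at h13
  exact dec3 _ (Nat.mod_lt a (by norm_num)) _ (Nat.mod_lt b (by norm_num)) h13

lemma decsum : ∀ a < 7, ∀ b < 5, ∀ c < 7, ∀ d < 5,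
    2 ^ a * 3 ^ b + 2 ^ c * 3 ^ d ≠ 103 := by decide

lemma L1 : ∀ a b c d : ℕ, (2 : ℤ) ^ a * 3 ^ b + 2 ^ c * 3 ^ d ≠ 103 := by
  intro a b c d h
  have hn : 2 ^ a * 3 ^ b + 2 ^ c * 3 ^ d = 103 := by exact_mod_cast h
  have key : ∀ x y : ℕ, 2 ^ x * 3 ^ y ≤ 103 → x < 7 ∧ y < 5 := by
    intro x y hxy
    constructor
    · by_contra h'
      have h2 : (2 : ℕ) ^ 7 ≤ 2 ^ x := Nat.pow_le_pow_right (by norm_num) (not_lt.mp h')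
      have h3 : (2 : ℕ) ^ x ≤ 2 ^ x * 3 ^ y := Nat.le_mul_of_pos_right _ (pow_pos (by norm_num) _)
      have := le_trans h2 (le_trans h3 hxy)
      norm_num at this
    · by_contra h'
      have h2 : (3 : ℕ) ^ 5 ≤ 3 ^ y := Nat.pow_le_pow_right (by norm_num) (not_lt.mp h')
      have h3 : (3 : ℕ) ^ y ≤ 2 ^ x * 3 ^ y := Nat.le_mul_of_pos_left _ (pow_pos (by norm_num) _)
      have := le_trans h2 (le_trans h3 hxy)
      norm_num at this
  obtain ⟨ha, hb⟩ := key a b (by omega)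
  obtain ⟨hc, hd⟩ := key c d (by omega)
  exact decsum a ha b hb c hc d hd hn

lemma L2 : ∀ a b c d : ℕ, (2 : ℤ) ^ a * 3 ^ b - 2 ^ c * 3 ^ d ≠ 103 := by
  intro a b c d h
  rcases a with _ | s <;> rcases c with _ | t
  · have hd2 : (2 : ℤ) ∣ 3 ^ b - 3 ^ d := by
      have h1 : Odd ((3 : ℤ) ^ b) := Odd.pow (by decide)
      have h2 : Odd ((3 : ℤ) ^ d) := Odd.pow (by decide)
      exact (Int.even_sub.mpr (by simp [← Int.not_odd_iff_even, h1, h2])).two_dvd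
    simp only [pow_zero, one_mul] at h
    rw [h] at hd2
    norm_num at hd2
  · simp only [pow_zero, one_mul] at h
    rcases b with _ | e
    · have hp : (0 : ℤ) < 2 ^ (t + 1) * 3 ^ d := by positivity
      simp only [pow_zero] at h
      linarith
    · rcases d with _ | f
      · simp only [pow_zero, mul_one] at h
        exact no2 (e + 1) (t + 1) (by linarith)
      · have hd3 : (3 : ℤ) ∣ 3 ^ (e + 1) - 2 ^ (t + 1) * 3 ^ (f + 1) :=
          dvd_sub ⟨3 ^ e, by ring⟩ ⟨2 ^ (t + 1) * 3 ^ f, by ring⟩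
        rw [h] at hd3
        norm_num at hd3
  · simp only [pow_zero, one_mul] at h
    rcases d with _ | f
    · simp only [pow_zero, mul_one] at h
      exact no104 (s + 1) b (by linarith)
    · rcases b with _ | e
      · simp only [pow_zero, mul_one] at h
        exact no1 (s + 1) (f + 1) (by linarith)
      · have hd3 : (3 : ℤ) ∣ 2 ^ (s + 1) * 3 ^ (e + 1) - 3 ^ (f + 1) :=
          dvd_sub ⟨2 ^ (s + 1) * 3 ^ e, by ring⟩ ⟨3 ^ f, by ring⟩
        rw [h] at hd3
        norm_num at hd3
  · have hd2 : (2 : ℤ) ∣ 2 ^ (s + 1) * 3 ^ b - 2 ^ (t + 1) * 3 ^ d :=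
      dvd_sub ⟨2 ^ s * 3 ^ b, by ring⟩ ⟨2 ^ t * 3 ^ d, by ring⟩
    rw [h] at hd2
    norm_num at hd2

lemma no103 : ¬ HasRep 103 2 := by
  rintro ⟨f, hf, hsum⟩
  rw [Fin.sum_univ_two] at hsum
  obtain ⟨a, b, h0⟩ := hf 0
  obtain ⟨c, d, h1⟩ := hf 1
  rcases h0 with h0 | h0 <;> rcases h1 with h1 | h1 <;> rw [h0, h1] at hsum
  · exact L1 a b c d hsum.symm
  · exact L2 a b c d (by linarith)
  · exact L2 c d a b (by linarith)
  · have p1 : (0 : ℤ) < 2 ^ a * 3 ^ b := by positivity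
    have p2 : (0 : ℤ) < 2 ^ c * 3 ^ d := by positivity
    linarith

lemma allRep : ∀ n : ℤ, 0 < n → n < 103 → HasRep n 2 := by
  intro n hn hlt
  interval_cases n
  · exact hrpn _ 1 0 0 0 (by norm_num)
  · exact hrpp _ 0 0 0 0 (by norm_num)
  · exact hrpp _ 0 0 1 0 (by norm_num)
  · exact hrpp _ 0 0 0 1 (by norm_num)
  · exact hrpp _ 0 0 2 0 (by norm_num)
  · exact hrpp _ 1 0 2 0 (by norm_num)
  · exact hrpp _ 0 0 1 1 (by norm_num)
  · exact hrpp _ 1 0 1 1 (by norm_num)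
  · exact hrpp _ 0 0 3 0 (by norm_num)
  · exact hrpp _ 0 0 0 2 (by norm_num)
  · exact hrpp _ 1 0 0 2 (by norm_num)
  · exact hrpp _ 0 1 0 2 (by norm_num)
  · exact hrpp _ 0 0 2 1 (by norm_num)
  · exact hrpp _ 1 0 2 1 (by norm_num)
  · exact hrpp _ 0 1 2 1 (by norm_num)
  · exact hrpp _ 2 0 2 1 (by norm_num)
  · exact hrpp _ 0 0 4 0 (by norm_num)
  · exact hrpp _ 1 0 4 0 (by norm_num)
  · exact hrpp _ 0 0 1 2 (by norm_num)
  · exact hrpp _ 1 0 1 2 (by norm_num)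
  · exact hrpp _ 0 1 1 2 (by norm_num)
  · exact hrpp _ 2 0 1 2 (by norm_num)
  · exact hrpn _ 3 1 0 0 (by norm_num)
  · exact hrpp _ 1 1 1 2 (by norm_num)
  · exact hrpp _ 0 0 3 1 (by norm_num)
  · exact hrpp _ 1 0 3 1 (by norm_num)
  · exact hrpp _ 0 1 3 1 (by norm_num)
  · exact hrpp _ 0 0 0 3 (by norm_num)
  · exact hrpp _ 1 0 0 3 (by norm_num)
  · exact hrpp _ 0 1 0 3 (by norm_num)
  · exact hrpp _ 2 0 0 3 (by norm_num)
  · exact hrpp _ 3 0 3 1 (by norm_num)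
  · exact hrpp _ 0 0 5 0 (by norm_num)
  · exact hrpp _ 1 0 5 0 (by norm_num)
  · exact hrpp _ 0 1 5 0 (by norm_num)
  · exact hrpp _ 2 0 5 0 (by norm_num)
  · exact hrpp _ 0 0 2 2 (by norm_num)
  · exact hrpp _ 1 0 2 2 (by norm_num)
  · exact hrpp _ 0 1 2 2 (by norm_num)
  · exact hrpp _ 2 0 2 2 (by norm_num)
  · exact hrpp _ 0 2 5 0 (by norm_num)
  · exact hrpp _ 1 1 2 2 (by norm_num)
  · exact hrpp _ 4 0 0 3 (by norm_num)
  · exact hrpp _ 3 0 2 2 (by norm_num)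
  · exact hrpp _ 0 2 2 2 (by norm_num)
  · exact hrpn _ 4 1 1 0 (by norm_num)
  · exact hrpn _ 4 1 0 0 (by norm_num)
  · exact hrpp _ 2 1 2 2 (by norm_num)
  · exact hrpp _ 0 0 4 1 (by norm_num)
  · exact hrpp _ 1 0 4 1 (by norm_num)
  · exact hrpp _ 0 1 4 1 (by norm_num)
  · exact hrpp _ 2 0 4 1 (by norm_num)
  · exact hrpn _ 1 3 0 0 (by norm_num)
  · exact hrpp _ 1 1 4 1 (by norm_num)
  · exact hrpp _ 0 0 1 3 (by norm_num)
  · exact hrpp _ 1 0 1 3 (by norm_num)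
  · exact hrpp _ 0 1 1 3 (by norm_num)
  · exact hrpp _ 2 0 1 3 (by norm_num)
  · exact hrpp _ 0 3 5 0 (by norm_num)
  · exact hrpp _ 1 1 1 3 (by norm_num)
  · exact hrpn _ 6 0 0 1 (by norm_num)
  · exact hrpp _ 3 0 1 3 (by norm_num)
  · exact hrpp _ 0 2 1 3 (by norm_num)
  · exact hrpp _ 4 0 4 1 (by norm_num)
  · exact hrpp _ 0 0 6 0 (by norm_num)
  · exact hrpp _ 1 0 6 0 (by norm_num)
  · exact hrpp _ 0 1 6 0 (by norm_num)
  · exact hrpp _ 2 0 6 0 (by norm_num)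
  · exact hrpn _ 3 2 0 1 (by norm_num)
  · exact hrpp _ 1 1 6 0 (by norm_num)
  · exact hrpn _ 3 2 0 0 (by norm_num)
  · exact hrpp _ 3 0 6 0 (by norm_num)
  · exact hrpp _ 0 0 3 2 (by norm_num)
  · exact hrpp _ 1 0 3 2 (by norm_num)
  · exact hrpp _ 0 1 3 2 (by norm_num)
  · exact hrpp _ 2 0 3 2 (by norm_num)
  · exact hrpn _ 0 4 2 0 (by norm_num)
  · exact hrpp _ 1 1 3 2 (by norm_num)
  · exact hrpn _ 0 4 1 0 (by norm_num)
  · exact hrpp _ 3 0 3 2 (by norm_num)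
  · exact hrpp _ 0 2 3 2 (by norm_num)
  · exact hrpp _ 0 0 0 4 (by norm_num)
  · exact hrpp _ 1 0 0 4 (by norm_num)
  · exact hrpp _ 0 1 0 4 (by norm_num)
  · exact hrpp _ 2 0 0 4 (by norm_num)
  · exact hrpp _ 5 0 1 3 (by norm_num)
  · exact hrpp _ 1 1 0 4 (by norm_num)
  · exact hrpp _ 4 0 3 2 (by norm_num)
  · exact hrpp _ 3 0 0 4 (by norm_num)
  · exact hrpp _ 0 2 0 4 (by norm_num)
  · exact hrpp _ 0 3 6 0 (by norm_num)
  · exact hrpn _ 5 1 2 0 (by norm_num)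
  · exact hrpp _ 2 1 0 4 (by norm_num)
  · exact hrpn _ 5 1 1 0 (by norm_num)
  · exact hrpn _ 5 1 0 0 (by norm_num)
  · exact hrpp _ 3 1 3 2 (by norm_num)
  · exact hrpp _ 0 0 5 1 (by norm_num)
  · exact hrpp _ 1 0 5 1 (by norm_num)
  · exact hrpp _ 0 1 5 1 (by norm_num)
  · exact hrpp _ 2 0 5 1 (by norm_num)
  · exact hrpn _ 7 0 0 3 (by norm_num)
  · exact hrpp _ 1 1 5 1 (by norm_num)

theorem least_no_rep_103 :
    (∀ n : ℤ, 0 < n → n < 103 → HasRep n 2) ∧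
    IsLeast {n : ℤ | 0 < n ∧ ¬ HasRep n 2} 103 := by
  refine ⟨allRep, ⟨by norm_num, no103⟩, ?_⟩
  rintro m ⟨hm, hrep⟩
  by_contra hlt
  exact hrep (allRep m hm (by omega))
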